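/- The Gibbs distribution π^η with the groupput throughput T_w = ν_w·c_w satisfies detailed balance with respect to the EconCast-C transition rates: for all w, w' ∈ W, π_w^η · r(w,w') = π_{w'}^η · r(w',w). In particular, π^η is the stationary distribution of the network Markov chain generated by these rates. -/

import Mathlib

open Finset

inductive NodeState : Type
  | s | l | x
deriving DecidableEq

instance instFintypeNodeState : Fintype NodeState where
  elems := {NodeState.s, NodeState.l, NodeState.x}
  complete := by intro a; cases a <;> simp

abbrev NetState (N : ℕ) := Fin N → NodeState

/-- Number of nodes in transmit state. -/
def numTransmit {N : ℕ} (w : NetState N) : ℕ :=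
  (univ.filter fun i => w i = NodeState.x).card

/-- Number of nodes in listen state (`c_w`). -/
def numListen {N : ℕ} (w : NetState N) : ℕ :=
  (univ.filter fun i => w i = NodeState.l).card

/-- The (finite) set `W` of collision-free network states. -/
def CF (N : ℕ) : Finset (NetState N) :=
  univ.filter fun w => numTransmit w ≤ 1

/-- Indicator `ν_w` that exactly one node is transmitting. -/
def nu {N : ℕ} (w : NetState N) : ℝ := if numTransmit w = 1 then 1 else 0

/-- Groupput throughput `T_w = ν_w · c_w` of a state. -/
noncomputable def Tg {N : ℕ} (w : NetState N) : ℝ := nu w * (numListen w : ℝ)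

/-- The penalty `P_w = Σ_{i: w_i=l} η_i L_i + Σ_{i: w_i=x} η_i X_i`. -/
noncomputable def penalty {N : ℕ} (η L X : Fin N → ℝ) (w : NetState N) : ℝ :=
  ∑ i ∈ univ.filter (fun i => w i = NodeState.l), η i * L i
  + ∑ i ∈ univ.filter (fun i => w i = NodeState.x), η i * X i

/-- Normalizing constant `Z^η`. -/
noncomputable def Zfun (N : ℕ) (σ : ℝ) (η L X : Fin N → ℝ) (T : NetState N → ℝ) : ℝ :=
  ∑ w ∈ CF N, Real.exp ((T w - penalty η L X w) / σ)

/-- The Gibbs distribution `π^η_w = exp((T_w − P_w)/σ)/Z^η`. -/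
noncomputable def gibbs (N : ℕ) (σ : ℝ) (η L X : Fin N → ℝ) (T : NetState N → ℝ)
    (w : NetState N) : ℝ :=
  Real.exp ((T w - penalty η L X w) / σ) / Zfun N σ η L X T

/-- EconCast-C (groupput mode) transition rates: from a state with no
transmitter, a sleeping node wakes to listen at rate `exp(−η_i L_i/σ)`, a
listening node goes to sleep at rate `1`, and a listening node starts
transmitting at rate `exp(η_i(L_i − X_i)/σ)`; a transmitting node moves back to
listen at rate `exp(−c_w/σ)`; all other rates vanish. -/
noncomputable def rateC (N : ℕ) (σ : ℝ) (η L X : Fin N → ℝ) (w w' : NetState N) : ℝ :=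
  (∑ i : Fin N, if w i = NodeState.s ∧ numTransmit w = 0 ∧ w' = Function.update w i NodeState.l
      then Real.exp (-(η i * L i) / σ) else 0)
  + (∑ i : Fin N, if w i = NodeState.l ∧ numTransmit w = 0 ∧ w' = Function.update w i NodeState.s
      then 1 else 0)
  + (∑ i : Fin N, if w i = NodeState.l ∧ numTransmit w = 0 ∧ w' = Function.update w i NodeState.x
      then Real.exp (η i * (L i - X i) / σ) else 0)
  + (∑ i : Fin N, if w i = NodeState.x ∧ w' = Function.update w i NodeState.l
      then Real.exp (-(numListen w : ℝ) / σ) else 0)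

/-!
Every transition of EconCast-C changes the state of a single node `i`, and each is paired with
its reverse: sleep ⇄ listen at rates `exp(-η_i L_i/σ)` and `1`, listen ⇄ transmit at rates
`exp(η_i(L_i - X_i)/σ)` and `exp(-c_{w'}/σ)`. In each pair the ratio of the two rates is exactly
`exp((T_{w'} - P_{w'} - T_w + P_w)/σ)`: the penalty moves by `η_i L_i` resp. `η_i (X_i - L_i)`,
and the throughput jumps from `0` to the number `c_{w'}` of listeners when a transmission
starts. Hence `π_w r(w,w') = π_{w'} r(w',w)` summand by summand, and summing detailed balance
over `w'` gives stationarity.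
-/

open Finset Function

lemma sum_mul_eq_mul_sum_of_detailed_balance {α : Type*} (s : Finset α) (π : α → ℝ)
    (r : α → α → ℝ) (h : ∀ w ∈ s, ∀ w' ∈ s, π w * r w w' = π w' * r w' w) :
    ∀ w ∈ s, ∑ w' ∈ s, π w' * r w' w = π w * ∑ w' ∈ s, r w w' := by
  intro w hw
  rw [mul_sum]
  exact sum_congr rfl fun w' hw' => (h w hw w' hw').symm

lemma ite_congr_of_iff {α : Sort*} {p q : Prop} [Decidable p] [Decidable q] {a b c : α}
    (h : p ↔ q) (hab : p → a = b) : (if p then a else c) = (if q then b else c) := by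
  by_cases hp : p
  · rw [if_pos hp, if_pos (h.1 hp), hab hp]
  · rw [if_neg hp, if_neg (mt h.2 hp)]

lemma update_eq_iff_update_eq {α β : Type*} [DecidableEq α] {w w' : α → β} {i : α} {a b : β} :
    (w i = a ∧ w' = update w i b) ↔ (w' i = b ∧ w = update w' i a) := by
  constructor
  · rintro ⟨rfl, rfl⟩
    simp
  · rintro ⟨rfl, rfl⟩
    simp

section CountUpdate

variable {ι β : Type*} [Fintype ι] [DecidableEq ι] [DecidableEq β] (w : ι → β) (i : ι) {a v : β}

lemma filter_update_eq_insert :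
    univ.filter (fun j => update w i v j = v) = insert i (univ.filter fun j => w j = v) := by
  ext j
  rcases eq_or_ne j i with rfl | hj <;> simp [*]

lemma filter_update_eq_erase (ha : a ≠ v) :
    univ.filter (fun j => update w i a j = v) = (univ.filter fun j => w j = v).erase i := by
  ext j
  rcases eq_or_ne j i with rfl | hj <;> simp [*]

lemma card_filter_update_eq_card_add_one (hw : w i ≠ v) :
    #{j | update w i v j = v} = #{j | w j = v} + 1 := by
  rw [filter_update_eq_insert, card_insert_of_notMem (by simpa)]

lemma card_filter_update_eq_card (ha : a ≠ v) (hw : w i ≠ v) :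
    #{j | update w i a j = v} = #{j | w j = v} := by
  rw [filter_update_eq_erase w i ha, erase_eq_of_notMem (by simpa)]

lemma card_filter_update_add_one_eq_card (ha : a ≠ v) (hw : w i = v) :
    #{j | update w i a j = v} + 1 = #{j | w j = v} := by
  rw [filter_update_eq_erase w i ha, card_erase_add_one (by simpa)]

end CountUpdate

section Network

variable {N : ℕ} {w w' : NetState N} {i : Fin N}

lemma numTransmit_update_of_ne {a : NodeState} (ha : a ≠ .x) (hw : w i ≠ .x) :
    numTransmit (update w i a) = numTransmit w :=
  card_filter_update_eq_card w i ha hw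

lemma numTransmit_update_x (hw : w i ≠ .x) :
    numTransmit (update w i .x) = numTransmit w + 1 :=
  card_filter_update_eq_card_add_one w i hw

lemma numTransmit_update_add_one_eq {a : NodeState} (ha : a ≠ .x) (hw : w i = .x) :
    numTransmit (update w i a) + 1 = numTransmit w :=
  card_filter_update_add_one_eq_card w i ha hw

lemma Tg_of_numTransmit_eq_zero (h : numTransmit w = 0) : Tg w = 0 := by
  simp [Tg, nu, h]

lemma Tg_of_numTransmit_eq_one (h : numTransmit w = 1) : Tg w = numListen w := by
  simp [Tg, nu, h]

noncomputable def nodeCost (η L X : Fin N → ℝ) (i : Fin N) : NodeState → ℝ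
  | .s => 0
  | .l => η i * L i
  | .x => η i * X i

lemma penalty_eq_sum_nodeCost (η L X : Fin N → ℝ) (w : NetState N) :
    penalty η L X w = ∑ j, nodeCost η L X j (w j) := by
  rw [penalty, sum_filter, sum_filter, ← sum_add_distrib]
  refine sum_congr rfl fun j _ => ?_
  cases w j <;> simp [nodeCost]

lemma penalty_update_add (η L X : Fin N → ℝ) (w : NetState N) (i : Fin N) (a : NodeState) :
    penalty η L X (update w i a) + nodeCost η L X i (w i)
      = penalty η L X w + nodeCost η L X i a := by
  simp only [penalty_eq_sum_nodeCost, apply_update (fun j => nodeCost η L X j),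
    sum_update_of_mem (mem_univ i), ← add_sum_erase univ _ (mem_univ i), sdiff_singleton_eq_erase]
  ring

lemma gibbs_mul_exp_eq_of_add_eq (σ : ℝ) (η L X : Fin N → ℝ) (T : NetState N → ℝ) {a b : ℝ}
    (h : (T w - penalty η L X w) / σ + a = (T w' - penalty η L X w') / σ + b) :
    gibbs N σ η L X T w * Real.exp a = gibbs N σ η L X T w' * Real.exp b := by
  simp only [gibbs, div_mul_eq_mul_div, ← Real.exp_add, h]

variable (σ : ℝ) (η L X : Fin N → ℝ)

lemma gibbs_mul_rate_sleep_listen :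
    (if w i = .s ∧ numTransmit w = 0 ∧ w' = update w i .l
      then gibbs N σ η L X Tg w * Real.exp (-(η i * L i) / σ) else 0)
    = (if w' i = .l ∧ numTransmit w' = 0 ∧ w = update w' i .s
      then gibbs N σ η L X Tg w' * 1 else 0) := by
  refine ite_congr_of_iff ⟨?_, ?_⟩ ?_
  · rintro ⟨hs, h0, rfl⟩
    exact ⟨update_self .., by rwa [numTransmit_update_of_ne (by simp) (by simp [hs])],
      (update_eq_iff_update_eq.1 ⟨hs, rfl⟩).2⟩
  · rintro ⟨hl, h0, rfl⟩
    exact ⟨update_self .., by rwa [numTransmit_update_of_ne (by simp) (by simp [hl])],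
      (update_eq_iff_update_eq.1 ⟨hl, rfl⟩).2⟩
  · rintro ⟨hs, h0, rfl⟩
    rw [← Real.exp_zero]
    refine gibbs_mul_exp_eq_of_add_eq σ η L X Tg ?_
    have hP := penalty_update_add η L X w i .l
    rw [hs] at hP
    rw [Tg_of_numTransmit_eq_zero h0, Tg_of_numTransmit_eq_zero
      (by rwa [numTransmit_update_of_ne (by simp) (by simp [hs])])]
    simp only [nodeCost] at hP
    rw [eq_sub_of_add_eq hP]
    ring

lemma gibbs_mul_rate_listen_transmit (hw' : w' ∈ CF N) :
    (if w i = .l ∧ numTransmit w = 0 ∧ w' = update w i .x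
      then gibbs N σ η L X Tg w * Real.exp (η i * (L i - X i) / σ) else 0)
    = (if w' i = .x ∧ w = update w' i .l
      then gibbs N σ η L X Tg w' * Real.exp (-(numListen w' : ℝ) / σ) else 0) := by
  refine ite_congr_of_iff ⟨?_, ?_⟩ ?_
  · rintro ⟨hl, -, rfl⟩
    exact update_eq_iff_update_eq.1 ⟨hl, rfl⟩
  · rintro ⟨hx, rfl⟩
    -- `w'` is collision-free, so once its transmitter `i` listens nobody transmits.
    have hCF : numTransmit w' ≤ 1 := (mem_filter.1 hw').2
    have h1 := numTransmit_update_add_one_eq (a := .l) (by simp) hx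
    exact ⟨update_self .., by omega, (update_eq_iff_update_eq.1 ⟨hx, rfl⟩).2⟩
  · rintro ⟨hl, h0, rfl⟩
    refine gibbs_mul_exp_eq_of_add_eq σ η L X Tg ?_
    have hP := penalty_update_add η L X w i .x
    rw [hl] at hP
    rw [Tg_of_numTransmit_eq_zero h0, Tg_of_numTransmit_eq_one
      (by rw [numTransmit_update_x (by simp [hl]), h0])]
    simp only [nodeCost] at hP
    rw [eq_sub_of_add_eq hP]
    ring

lemma gibbs_mul_rateC_comm (hw : w ∈ CF N) (hw' : w' ∈ CF N) :
    gibbs N σ η L X Tg w * rateC N σ η L X w w'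
      = gibbs N σ η L X Tg w' * rateC N σ η L X w' w := by
  simp only [rateC, mul_add, mul_sum, mul_ite, mul_zero]
  rw [sum_congr rfl fun i _ => gibbs_mul_rate_sleep_listen (w := w) (w' := w') (i := i) σ η L X,
    sum_congr rfl fun i _ => (gibbs_mul_rate_sleep_listen (w := w') (w' := w) (i := i) σ η L X).symm,
    sum_congr rfl fun i _ => gibbs_mul_rate_listen_transmit (i := i) σ η L X hw',
    sum_congr rfl fun i _ => (gibbs_mul_rate_listen_transmit (i := i) σ η L X hw).symm]
  ring

end Network

theorem gibbs_detailed_balance_econcastC_groupput_general (N : ℕ)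
    (σ : ℝ) (η L X : Fin N → ℝ) :
    (∀ w ∈ CF N, ∀ w' ∈ CF N,
      gibbs N σ η L X Tg w * rateC N σ η L X w w'
        = gibbs N σ η L X Tg w' * rateC N σ η L X w' w)
    ∧ (∀ w ∈ CF N,
      ∑ w' ∈ CF N, gibbs N σ η L X Tg w' * rateC N σ η L X w' w
        = gibbs N σ η L X Tg w * ∑ w' ∈ CF N, rateC N σ η L X w w') := by
  have detailed := fun w (hw : w ∈ CF N) w' (hw' : w' ∈ CF N) =>
    gibbs_mul_rateC_comm σ η L X hw hw'
  exact ⟨detailed, sum_mul_eq_mul_sum_of_detailed_balance _ _ _ detailed⟩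

/-- The Gibbs distribution with groupput throughput satisfies
detailed balance w.r.t. the EconCast-C transition rates; in particular it is
stationary for the network Markov chain. -/
theorem gibbs_detailed_balance_econcastC_groupput (N : ℕ) (hN : 2 ≤ N)
    (σ : ℝ) (hσ : 0 < σ) (η L X : Fin N → ℝ)
    (hη : ∀ i, 0 ≤ η i) (hL : ∀ i, 0 < L i) (hX : ∀ i, 0 < X i) :
    (∀ w ∈ CF N, ∀ w' ∈ CF N,
      gibbs N σ η L X Tg w * rateC N σ η L X w w'
        = gibbs N σ η L X Tg w' * rateC N σ η L X w' w)
    ∧ (∀ w ∈ CF N,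
      ∑ w' ∈ CF N, gibbs N σ η L X Tg w' * rateC N σ η L X w' w
        = gibbs N σ η L X Tg w * ∑ w' ∈ CF N, rateC N σ η L X w w') :=
  gibbs_detailed_balance_econcastC_groupput_general N σ η L X
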